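/- arXiv:math/0305248 — 3 statements merged into one kernel-verified Lean document; each statement's English description precedes it below -/
import Mathlib

section
/- Let H ∈ ℂ[x,y] be a polynomial of degree d whose highest homogeneous part is a product of d pairwise non-proportional linear factors (i.e. H is regular at infinity). Then the partial derivatives H_x and H_y have no common nonconstant polynomial factor. -/
open MvPolynomial

namespace Stmt3Aux

variable {σ : Type*} [Fintype σ] [DecidableEq σ]

lemma degree_sum_univ (d : σ →₀ ℕ) : d.degree = ∑ i, d i := by
  rw [Finsupp.degree]
  exact Finset.sum_subset (Finset.subset_univ _)
    (fun _ _ h => Finsupp.notMem_support_iff.mp h)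

lemma degree_sub_single {s : σ →₀ ℕ} {i : σ} (h : 1 ≤ s i) :
    (s - Finsupp.single i 1).degree = s.degree - 1 := by
  rw [degree_sum_univ, degree_sum_univ,
    ← Finset.sum_erase_add _ _ (Finset.mem_univ i),
    ← Finset.sum_erase_add _ _ (Finset.mem_univ i)]
  have key : ∀ j : σ, ((s - Finsupp.single i 1 : σ →₀ ℕ)) j = s j - Finsupp.single i 1 j :=
    fun j => Finsupp.tsub_apply s (Finsupp.single i 1) j
  have h1 : ∑ j ∈ Finset.univ.erase i, ((s - Finsupp.single i 1 : σ →₀ ℕ)) j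
      = ∑ j ∈ Finset.univ.erase i, s j :=
    Finset.sum_congr rfl fun j hj => by
      rw [key j, Finsupp.single_apply,
        if_neg (Finset.ne_of_mem_erase hj).symm, Nat.sub_zero]
  have h2 : ((s - Finsupp.single i 1 : σ →₀ ℕ)) i = s i - 1 := by
    rw [key i, Finsupp.single_apply, if_pos rfl]
  omega

lemma isHomogeneous_pderiv {φ : MvPolynomial σ ℂ} {n : ℕ}
    (h : φ.IsHomogeneous n) (i : σ) : (pderiv i φ).IsHomogeneous (n - 1) := by
  conv_lhs => rw [φ.as_sum]
  rw [map_sum]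
  apply IsHomogeneous.sum
  intro s hs
  rw [pderiv_monomial]
  rcases Nat.eq_zero_or_pos (s i) with h0 | h0
  · rw [h0]; simp only [Nat.cast_zero, mul_zero, monomial_zero]
    exact isHomogeneous_zero _ _ _
  · apply isHomogeneous_monomial
    have hdeg : s.degree = n := by
      by_contra hne
      exact (mem_support_iff.mp hs) (h.coeff_eq_zero hne)
    rw [degree_sub_single h0, hdeg]

lemma euler_monomial (s : σ →₀ ℕ) (a : ℂ) :
    ∑ i, (X i : MvPolynomial σ ℂ) * pderiv i (monomial s a)
      = (s.degree : ℂ) • monomial s a := by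
  have hterm : ∀ i : σ, (X i : MvPolynomial σ ℂ) * pderiv i (monomial s a)
      = monomial s ((s i : ℂ) * a) := by
    intro i
    rw [pderiv_monomial, X, monomial_mul, one_mul]
    rcases Nat.eq_zero_or_pos (s i) with h0 | h0
    · rw [h0]; simp
    · rw [add_tsub_cancel_of_le (Finsupp.single_le_iff.mpr h0), mul_comm]
  rw [Finset.sum_congr rfl fun i _ => hterm i]
  rw [← map_sum (monomial s), ← Finset.sum_mul, ← Nat.cast_sum,
    ← degree_sum_univ, smul_monomial, smul_eq_mul]

/-- Euler's identity. -/
lemma euler {φ : MvPolynomial σ ℂ} {n : ℕ} (h : φ.IsHomogeneous n) :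
    ∑ i, (X i : MvPolynomial σ ℂ) * pderiv i φ = (n : ℂ) • φ :=
  calc ∑ i, (X i : MvPolynomial σ ℂ) * pderiv i φ
      = ∑ i, ∑ s ∈ φ.support, X i * pderiv i (monomial s (coeff s φ)) := by
        refine Finset.sum_congr rfl fun i _ => ?_
        conv_lhs => rw [φ.as_sum]
        rw [map_sum, Finset.mul_sum]
    _ = ∑ s ∈ φ.support, ∑ i, X i * pderiv i (monomial s (coeff s φ)) :=
        Finset.sum_comm
    _ = ∑ s ∈ φ.support, (n : ℂ) • monomial s (coeff s φ) := by
        refine Finset.sum_congr rfl fun s hs => ?_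
        rw [euler_monomial]
        congr 2
        by_contra hne
        exact (mem_support_iff.mp hs) (h.coeff_eq_zero hne)
    _ = (n : ℂ) • φ := by rw [← Finset.smul_sum, ← φ.as_sum]


section Top

variable {τ : Type*}

lemma top_ne_zero {φ : MvPolynomial τ ℂ} (h : φ ≠ 0) :
    homogeneousComponent φ.totalDegree φ ≠ 0 := by
  obtain ⟨m, hm, hsup⟩ := Finset.exists_mem_eq_sup φ.support
    (support_nonempty.mpr h) (fun s : τ →₀ ℕ => s.sum fun _ e => e)
  intro h0
  have hc := coeff_homogeneousComponent φ.totalDegree φ m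
  rw [h0, coeff_zero] at hc
  have hdm : m.degree = φ.totalDegree := by
    rw [totalDegree, hsup]; rfl
  rw [if_pos hdm] at hc
  exact mem_support_iff.mp hm hc.symm

lemma top_residual {φ : MvPolynomial τ ℂ} (h : φ ≠ 0) :
    φ - homogeneousComponent φ.totalDegree φ = 0 ∨
      (φ - homogeneousComponent φ.totalDegree φ).totalDegree < φ.totalDegree := by
  set ψ := φ - homogeneousComponent φ.totalDegree φ with hψ
  rcases eq_or_ne ψ 0 with h0 | h0
  · exact Or.inl h0
  · right
    by_contra hn
    push_neg at hn
    have hz : homogeneousComponent ψ.totalDegree ψ = 0 := by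
      rw [hψ, map_sub]
      rcases eq_or_ne ψ.totalDegree φ.totalDegree with he | he
      · rw [he, homogeneousComponent_of_mem (homogeneousComponent_mem _ _),
          if_pos rfl, sub_self]
      · have hlt : φ.totalDegree < ψ.totalDegree := lt_of_le_of_ne hn (Ne.symm he)
        rw [homogeneousComponent_eq_zero _ _ hlt,
          homogeneousComponent_of_mem (homogeneousComponent_mem _ _),
          if_neg he, sub_zero]
    exact top_ne_zero h0 hz

lemma top_mul {f g : MvPolynomial τ ℂ} (hf : f ≠ 0) (hg : g ≠ 0) :
    (f * g).totalDegree = f.totalDegree + g.totalDegree ∧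
      homogeneousComponent (f.totalDegree + g.totalDegree) (f * g)
        = homogeneousComponent f.totalDegree f * homogeneousComponent g.totalDegree g := by
  set a := f.totalDegree
  set b := g.totalDegree
  set F := homogeneousComponent a f with hF
  set G := homogeneousComponent b g with hG
  have hFG : (F * G).IsHomogeneous (a + b) :=
    (homogeneousComponent_isHomogeneous a f).mul (homogeneousComponent_isHomogeneous b g)
  have hFG0 : F * G ≠ 0 := mul_ne_zero (top_ne_zero hf) (top_ne_zero hg)
  have hsmall : ∀ p : MvPolynomial τ ℂ, p = 0 ∨ p.totalDegree < a + b →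
      homogeneousComponent (a + b) p = 0 := by
    rintro p (rfl | hp)
    · exact map_zero _
    · exact homogeneousComponent_eq_zero _ _ hp
  have hcomp : homogeneousComponent (a + b) (f * g) = F * G := by
    have hfg : f * g = F * G + (F * (g - G) + (f - F) * G + (f - F) * (g - G)) := by ring
    rw [hfg, map_add, map_add, map_add]
    have h1 : homogeneousComponent (a + b) (F * (g - G)) = 0 := by
      apply hsmall
      rcases top_residual hg with h0 | h0 <;> rw [← hG] at h0
      · left; rw [h0, mul_zero]
      · right
        calc (F * (g - G)).totalDegree ≤ F.totalDegree + (g - G).totalDegree :=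
              totalDegree_mul _ _
          _ ≤ a + (g - G).totalDegree := by
              gcongr
              exact (homogeneousComponent_isHomogeneous a f).totalDegree_le
          _ < a + b := by omega
    have h2 : homogeneousComponent (a + b) ((f - F) * G) = 0 := by
      apply hsmall
      rcases top_residual hf with h0 | h0 <;> rw [← hF] at h0
      · left; rw [h0, zero_mul]
      · right
        calc ((f - F) * G).totalDegree ≤ (f - F).totalDegree + G.totalDegree :=
              totalDegree_mul _ _
          _ ≤ (f - F).totalDegree + b := by
              gcongr
              exact (homogeneousComponent_isHomogeneous b g).totalDegree_le
          _ < a + b := by omega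
    have h3 : homogeneousComponent (a + b) ((f - F) * (g - G)) = 0 := by
      apply hsmall
      rcases top_residual hf with h0 | h0 <;> rw [← hF] at h0
      · left; rw [h0, zero_mul]
      · rcases top_residual hg with h0' | h0' <;> rw [← hG] at h0'
        · left; rw [h0', mul_zero]
        · right
          calc ((f - F) * (g - G)).totalDegree
              ≤ (f - F).totalDegree + (g - G).totalDegree := totalDegree_mul _ _
            _ < a + b := by omega
    rw [h1, h2, h3,
      homogeneousComponent_of_mem ((mem_homogeneousSubmodule _ _).mpr hFG), if_pos rfl]
    ring
  have hdeg : (f * g).totalDegree = a + b := by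
    refine le_antisymm (totalDegree_mul _ _) ?_
    by_contra hn
    push_neg at hn
    exact hFG0 (hcomp ▸ homogeneousComponent_eq_zero _ _ hn)
  exact ⟨hdeg, hcomp⟩

lemma eq_C_of_totalDegree_eq_zero {p : MvPolynomial τ ℂ} (h : p.totalDegree = 0) :
    p = C (coeff 0 p) := by
  classical
  ext m
  rcases eq_or_ne m 0 with rfl | hm
  · rw [coeff_C, if_pos rfl]
  · rw [coeff_C, if_neg (Ne.symm hm)]
    by_contra hc
    have := (totalDegree_eq_zero_iff τ p).mp h m (mem_support_iff.mpr hc)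
    exact hm (Finsupp.ext this)

lemma isUnit_of_C {c : ℂ} (hc : c ≠ 0) : IsUnit (C c : MvPolynomial τ ℂ) :=
  (isUnit_iff_ne_zero.mpr hc).map (C : ℂ →+* MvPolynomial τ ℂ)

lemma not_isUnit_of_totalDegree_pos {p : MvPolynomial τ ℂ} (h : 0 < p.totalDegree) :
    ¬ IsUnit p := by
  intro hu
  obtain ⟨v, hv⟩ := hu.exists_right_inv
  have hp0 : p ≠ 0 := by rintro rfl; simp at hv
  have hv0 : v ≠ 0 := by rintro rfl; simp at hv
  have := (top_mul hp0 hv0).1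
  rw [hv, totalDegree_one] at this
  omega

lemma irreducible_of_linear {p : MvPolynomial τ ℂ} (h1 : p.IsHomogeneous 1) (h0 : p ≠ 0) :
    Irreducible p := by
  have htd : p.totalDegree = 1 := h1.totalDegree h0
  constructor
  · exact not_isUnit_of_totalDegree_pos (by omega)
  · intro f g hfg
    have hf0 : f ≠ 0 := by rintro rfl; rw [zero_mul] at hfg; exact h0 hfg
    have hg0 : g ≠ 0 := by rintro rfl; rw [mul_zero] at hfg; exact h0 hfg
    have hsum := (top_mul hf0 hg0).1
    rw [← hfg, htd] at hsum
    rcases Nat.eq_zero_or_pos f.totalDegree with hf | hf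
    · left
      rw [eq_C_of_totalDegree_eq_zero hf]
      exact isUnit_of_C fun hc => hf0 (by rw [eq_C_of_totalDegree_eq_zero hf, hc, map_zero])
    · right
      have hg : g.totalDegree = 0 := by omega
      rw [eq_C_of_totalDegree_eq_zero hg]
      exact isUnit_of_C fun hc => hg0 (by rw [eq_C_of_totalDegree_eq_zero hg, hc, map_zero])

end Top


section PD

variable {σ : Type*} [Fintype σ] [DecidableEq σ]

lemma hc_pderiv {φ : MvPolynomial σ ℂ} {d : ℕ} (i : σ) (hd : 1 ≤ d)
    (hφ : φ.totalDegree = d) :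
    homogeneousComponent (d - 1) (pderiv i φ)
      = pderiv i (homogeneousComponent d φ) := by
  have hsum : φ = ∑ k ∈ Finset.range (d + 1), homogeneousComponent k φ := by
    rw [← hφ]; exact (sum_homogeneousComponent φ).symm
  conv_lhs => rw [hsum]
  rw [map_sum, map_sum]
  rw [Finset.sum_eq_single_of_mem d (Finset.mem_range.mpr (by omega))]
  · rw [homogeneousComponent_of_mem ((mem_homogeneousSubmodule _ _).mpr
      (isHomogeneous_pderiv (homogeneousComponent_isHomogeneous d φ) i)), if_pos rfl]
  · intro k hk hkd
    rcases Nat.eq_zero_or_pos k with rfl | hk1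
    · rw [homogeneousComponent_zero, pderiv_C, map_zero]
    · rw [homogeneousComponent_of_mem ((mem_homogeneousSubmodule _ _).mpr
        (isHomogeneous_pderiv (homogeneousComponent_isHomogeneous k φ) i)),
        if_neg (by omega)]

lemma totalDegree_pderiv_le (i : σ) (φ : MvPolynomial σ ℂ) :
    (pderiv i φ).totalDegree ≤ φ.totalDegree - 1 := by
  have h : pderiv i φ
      = ∑ k ∈ Finset.range (φ.totalDegree + 1), pderiv i (homogeneousComponent k φ) := by
    conv_lhs => rw [← sum_homogeneousComponent φ]
    rw [map_sum]
  rw [h]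
  refine (totalDegree_finset_sum _ _).trans (Finset.sup_le ?_)
  intro k hk
  have h1 := (isHomogeneous_pderiv (homogeneousComponent_isHomogeneous k φ) i).totalDegree_le
  have hk' := Finset.mem_range.mp hk
  omega

end PD

lemma dvd_of_dvd_unit_mul {τ : Type*} {a u b : MvPolynomial τ ℂ}
    (hu : IsUnit u) (h : a ∣ u * b) : a ∣ b := by
  obtain ⟨v, hv⟩ := hu.exists_left_inv
  have h2 := h.mul_left v
  rwa [← mul_assoc, hv, one_mul] at h2

end Stmt3Aux

/-- If `H ∈ ℂ[x,y]` has degree `d ≥ 1` and its highest homogeneous part is a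
product of `d` pairwise non-proportional linear factors (`H` is regular at
infinity), then `H_x` and `H_y` have no common nonconstant factor. -/
theorem stmt3 (d : ℕ) (hd : 1 ≤ d) (H : MvPolynomial (Fin 2) ℂ)
    (hdeg : H.totalDegree = d)
    (L : Fin d → MvPolynomial (Fin 2) ℂ)
    (hL : ∀ i, (L i).IsHomogeneous 1)
    (hprod : homogeneousComponent d H = ∏ i, L i)
    (hnp : ∀ i j, i ≠ j → ∀ c : ℂ, L i ≠ c • L j) :
    IsRelPrime (pderiv 0 H) (pderiv 1 H) := by
  intro q hqx hqy
  by_contra hq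
  have hH0 : H ≠ 0 := by intro h; rw [h, totalDegree_zero] at hdeg; omega
  set P := homogeneousComponent d H with hPdef
  have hPhom : P.IsHomogeneous d := homogeneousComponent_isHomogeneous d H
  have hP0 : P ≠ 0 := by
    have h := Stmt3Aux.top_ne_zero hH0
    rw [hdeg] at h
    exact h
  have hL0 : ∀ i, L i ≠ 0 := by
    intro i hi
    exact hP0 (hprod.trans (Finset.prod_eq_zero (Finset.mem_univ i) hi))
  -- Step A : the top form of q divides both partials of P
  have stepA : ∀ i : Fin 2, q ∣ pderiv i H →
      homogeneousComponent q.totalDegree q ∣ pderiv i P := by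
    intro i hdvd
    have hDP : pderiv i P = homogeneousComponent (d - 1) (pderiv i H) := by
      rw [hPdef]
      exact (Stmt3Aux.hc_pderiv i hd hdeg).symm
    obtain ⟨g, hg⟩ := hdvd
    rcases eq_or_ne (pderiv i H) 0 with h0 | h0
    · rw [hDP, h0, map_zero]; exact dvd_zero _
    · have hq0 : q ≠ 0 := by rintro rfl; rw [zero_mul] at hg; exact h0 hg
      have hg0 : g ≠ 0 := by rintro rfl; rw [mul_zero] at hg; exact h0 hg
      obtain ⟨htd, hcomp⟩ := Stmt3Aux.top_mul hq0 hg0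
      have hle : (pderiv i H).totalDegree ≤ d - 1 := by
        have h1 := Stmt3Aux.totalDegree_pderiv_le i H
        rwa [hdeg] at h1
      rw [hg] at hle
      rcases eq_or_ne (q.totalDegree + g.totalDegree) (d - 1) with he | he
      · rw [hDP, hg, ← he, hcomp]
        exact dvd_mul_right _ _
      · have hlt : (q * g).totalDegree < d - 1 := by omega
        rw [hDP, hg, homogeneousComponent_eq_zero _ _ hlt]
        exact dvd_zero _
  set ℓ := homogeneousComponent q.totalDegree q with hldef
  have hlx : ℓ ∣ pderiv 0 P := stepA 0 hqx
  have hly : ℓ ∣ pderiv 1 P := stepA 1 hqy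
  -- Euler's identity gives ℓ ∣ P
  have heuler := Stmt3Aux.euler hPhom
  rw [Fin.sum_univ_two] at heuler
  have hlP : ℓ ∣ P := by
    have hdvd : ℓ ∣ (d : ℂ) • P := by
      rw [← heuler]
      exact dvd_add (hlx.mul_left _) (hly.mul_left _)
    rw [smul_eq_C_mul] at hdvd
    exact Stmt3Aux.dvd_of_dvd_unit_mul
      (Stmt3Aux.isUnit_of_C (Nat.cast_ne_zero.mpr (by omega))) hdvd
  have hq0 : q ≠ 0 := by
    rintro rfl
    rw [hldef, map_zero, zero_dvd_iff] at hlP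
    exact hP0 hlP
  have hl0 : ℓ ≠ 0 := Stmt3Aux.top_ne_zero hq0
  have hlu : ¬ IsUnit ℓ := by
    intro hu
    apply hq
    obtain ⟨v, hv⟩ := hu.exists_right_inv
    have hv0 : v ≠ 0 := by rintro rfl; rw [mul_zero] at hv; exact one_ne_zero hv.symm
    have h1 := (Stmt3Aux.top_mul hl0 hv0).1
    rw [hv, totalDegree_one] at h1
    have hltd : ℓ.totalDegree = q.totalDegree :=
      (homogeneousComponent_isHomogeneous _ _).totalDegree hl0
    have hqtd : q.totalDegree = 0 := by omega
    rw [Stmt3Aux.eq_C_of_totalDegree_eq_zero hqtd]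
    exact Stmt3Aux.isUnit_of_C fun hcc =>
      hq0 (by rw [Stmt3Aux.eq_C_of_totalDegree_eq_zero hqtd, hcc, map_zero])
  -- extract an irreducible factor, which must be one of the lines
  obtain ⟨r, hr, hrl⟩ := WfDvdMonoid.exists_irreducible_factor hlu hl0
  have hrprime : Prime r := UniqueFactorizationMonoid.irreducible_iff_prime.mp hr
  have hrP : r ∣ ∏ i, L i := hprod ▸ (hrl.trans hlP)
  obtain ⟨i, -, hri⟩ := (hrprime.dvd_finset_prod_iff _).mp hrP
  obtain ⟨u, hu⟩ := hri
  have hLi0 := hL0 i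
  have hr0 : r ≠ 0 := fun h => hLi0 (by rw [hu, h, zero_mul])
  have hu0 : u ≠ 0 := fun h => hLi0 (by rw [hu, h, mul_zero])
  have h1 := (Stmt3Aux.top_mul hr0 hu0).1
  rw [← hu, (hL i).totalDegree hLi0] at h1
  have hrtd : r.totalDegree ≠ 0 := by
    intro h
    exact hr.not_isUnit (by
      rw [Stmt3Aux.eq_C_of_totalDegree_eq_zero h]
      exact Stmt3Aux.isUnit_of_C fun hcc =>
        hr0 (by rw [Stmt3Aux.eq_C_of_totalDegree_eq_zero h, hcc, map_zero]))
  have hutd : u.totalDegree = 0 := by omega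
  obtain ⟨c, rfl⟩ : ∃ c : ℂ, u = C c :=
    ⟨coeff 0 u, Stmt3Aux.eq_C_of_totalDegree_eq_zero hutd⟩
  have hcu0 : c ≠ 0 := fun h => hu0 (by rw [h, map_zero])
  have hLir : L i ∣ r := by
    refine ⟨C c⁻¹, ?_⟩
    rw [hu, mul_assoc, ← C_mul, mul_inv_cancel₀ hcu0, C_1, mul_one]
  have hLix : L i ∣ pderiv 0 P := hLir.trans (hrl.trans hlx)
  have hLiy : L i ∣ pderiv 1 P := hLir.trans (hrl.trans hly)
  -- final contradiction
  set Q := ∏ j ∈ Finset.univ.erase i, L j with hQdef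
  have hPQ : P = L i * Q := by
    rw [hprod, hQdef, Finset.mul_prod_erase _ _ (Finset.mem_univ i)]
  have hkey : ∀ k : Fin 2, L i ∣ pderiv k P → L i ∣ pderiv k (L i) * Q := by
    intro k hdvd
    rw [hPQ, pderiv_mul] at hdvd
    have h2 : L i ∣ L i * pderiv k Q := dvd_mul_right _ _
    have h3 := dvd_sub hdvd h2
    rwa [add_sub_cancel_right] at h3
  have hAhom : ∀ k : Fin 2, (pderiv k (L i)).IsHomogeneous 0 := fun k => by
    have h := Stmt3Aux.isHomogeneous_pderiv (hL i) k
    simpa using h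
  have hunitA : ∀ k : Fin 2, pderiv k (L i) ≠ 0 → IsUnit (pderiv k (L i)) := by
    intro k hk
    have htd0 : (pderiv k (L i)).totalDegree = 0 := Nat.le_zero.mp (hAhom k).totalDegree_le
    rw [Stmt3Aux.eq_C_of_totalDegree_eq_zero htd0]
    exact Stmt3Aux.isUnit_of_C fun hcc =>
      hk (by rw [Stmt3Aux.eq_C_of_totalDegree_eq_zero htd0, hcc, map_zero])
  have final : ∀ k : Fin 2, L i ∣ pderiv k P → pderiv k (L i) ≠ 0 → False := by
    intro k hdvd hA
    have h3 := hkey k hdvd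
    have h4 : L i ∣ Q :=
      Stmt3Aux.dvd_of_dvd_unit_mul (hunitA k hA) h3
    have hprime : Prime (L i) := UniqueFactorizationMonoid.irreducible_iff_prime.mp
      (Stmt3Aux.irreducible_of_linear (hL i) hLi0)
    rw [hQdef] at h4
    obtain ⟨j, hj, hij⟩ := (hprime.dvd_finset_prod_iff _).mp h4
    have hji : j ≠ i := Finset.ne_of_mem_erase hj
    obtain ⟨w, hw⟩ := hij
    have hLj0 := hL0 j
    have hw0 : w ≠ 0 := fun h => hLj0 (by rw [hw, h, mul_zero])
    have h5 := (Stmt3Aux.top_mul hLi0 hw0).1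
    rw [← hw, (hL j).totalDegree hLj0, (hL i).totalDegree hLi0] at h5
    have hwtd : w.totalDegree = 0 := by omega
    obtain ⟨cw, rfl⟩ : ∃ c : ℂ, w = C c :=
      ⟨coeff 0 w, Stmt3Aux.eq_C_of_totalDegree_eq_zero hwtd⟩
    exact hnp j i hji cw (by rw [smul_eq_C_mul, hw, mul_comm])
  have heL := Stmt3Aux.euler (hL i)
  rw [Fin.sum_univ_two] at heL
  by_cases hA0 : pderiv 0 (L i) = 0
  · by_cases hA1 : pderiv 1 (L i) = 0
    · rw [hA0, hA1, mul_zero, mul_zero, add_zero, Nat.cast_one, one_smul] at heL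
      exact hLi0 heL.symm
    · exact final 1 hLiy hA1
  · exact final 0 hLix hA0
end

section
/- Let y(t) be a nontrivial solution of the linear differential equation y^{(n)} + a_{n−1}(t) y^{(n−1)} + … + a_0(t) y = 0 whose coefficients are holomorphic on a closed line segment I ⊂ ℂ of length l with |a_j(t)| ≤ C for all j and all t ∈ I, where C ≥ 1. Then the variation of argument of y along I is at most π(n+1)(1 + lC/log(3/2)). -/
/-!
Cut the segment into about `1 + lC / log (3/2)` pieces, each short enough that
`(length) · C ≤ 1/2`. Parametrise a piece by `s ∈ [A, B]` and put `v_k = (z1 - z0)^k y^{(k)}`, so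
that `v_k' = v_{k+1}` and the equation bounds `|v_n|` by `R = ∑ C l^{n-j} max |v_j|`. If the
argument of `y` varied by `nπ` or more on the piece, then for every `β` the real function
`Im (e^{iβ} v_0)` would have `n` zeros, so by Rolle `Im (e^{iβ} v_k)` vanishes somewhere for each
`k < n`. Integrating down from `v_n` gives `|Im (e^{iβ} v_k)| ≤ (B - A)^{n-k} R` for every `β`,
i.e. `|v_k| ≤ (B - A)^{n-k} R`, hence `R ≤ q R` with `q < 1`. Thus `R = 0` and `y` vanishes on the
piece, a contradiction: each piece contributes less than `nπ` to the variation of the argument.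
-/

open Complex Set

section RealInterval

variable {A B : ℝ}

theorem exists_finset_deriv_eq_zero_of_finset_eq_zero {f f' : ℝ → ℝ}
    (hf : ∀ x ∈ Icc A B, HasDerivAt f (f' x) x) {Z : Finset ℝ} (hZ : ↑Z ⊆ Icc A B)
    (hZf : ∀ x ∈ Z, f x = 0) :
    ∃ Z' : Finset ℝ, Z.card ≤ Z'.card + 1 ∧ ↑Z' ⊆ Icc A B ∧ ∀ x ∈ Z', f' x = 0 := by
  have rolle : ∀ x ∈ Z, ∀ y ∈ Z, x < y → ∃ z ∈ Ioo x y, f' z = 0 := by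
    intro x hx y hy hxy
    have hxy_sub : Icc x y ⊆ Icc A B := Icc_subset_Icc (hZ hx).1 (hZ hy).2
    obtain ⟨z, hz, hz'⟩ := exists_hasDerivAt_eq_zero hxy
      (fun t ht => (hf t (hxy_sub ht)).continuousAt.continuousWithinAt)
      ((hZf x hx).trans (hZf y hy).symm)
      (fun t ht => hf t (hxy_sub (Ioo_subset_Icc_self ht)))
    exact ⟨z, hz, hz'⟩
  choose! ξ hξ hξf' using rolle
  refine ⟨((Z ×ˢ Z).filter fun p => p.1 < p.2).image fun p => ξ p.1 p.2, ?_, ?_, ?_⟩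
  · refine Finset.card_le_of_interleaved fun x hx y hy hxy _ => ⟨ξ x y, ?_, hξ x hx y hy hxy⟩
    exact Finset.mem_image.2 ⟨(x, y), by simp [hx, hy, hxy], rfl⟩
  · intro z hz
    simp only [Finset.coe_image, Finset.coe_filter, Finset.mem_product, mem_image,
      mem_ofPred_eq] at hz
    obtain ⟨⟨x, y⟩, ⟨⟨hx, hy⟩, hxy⟩, rfl⟩ := hz
    exact Icc_subset_Icc (hZ hx).1 (hZ hy).2 (Ioo_subset_Icc_self (hξ x hx y hy hxy))
  · simp only [Finset.mem_image, Finset.mem_filter, Finset.mem_product]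
    rintro _ ⟨⟨x, y⟩, ⟨⟨hx, hy⟩, hxy⟩, rfl⟩
    exact hξf' x hx y hy hxy

theorem exists_finset_deriv_iterate_eq_zero {f : ℕ → ℝ → ℝ}
    (hf : ∀ k, ∀ x ∈ Icc A B, HasDerivAt (f k) (f (k + 1) x) x) {Z : Finset ℝ}
    (hZ : ↑Z ⊆ Icc A B) (hZf : ∀ x ∈ Z, f 0 x = 0) (k : ℕ) :
    ∃ Z' : Finset ℝ, Z.card ≤ Z'.card + k ∧ ↑Z' ⊆ Icc A B ∧ ∀ x ∈ Z', f k x = 0 := by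
  induction k with
  | zero => exact ⟨Z, le_rfl, hZ, hZf⟩
  | succ k ih =>
    obtain ⟨Z', hcard, hZ', hZ'f⟩ := ih
    obtain ⟨Z'', hcard', hZ'', hZ''f⟩ :=
      exists_finset_deriv_eq_zero_of_finset_eq_zero (hf k) hZ' hZ'f
    exact ⟨Z'', by omega, hZ'', hZ''f⟩

theorem abs_le_mul_of_eq_zero_of_abs_deriv_le {f f' : ℝ → ℝ} {K ξ : ℝ}
    (hf : ∀ x ∈ Icc A B, HasDerivAt f (f' x) x) (hξ : ξ ∈ Icc A B) (hfξ : f ξ = 0)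
    (hK : ∀ x ∈ Icc A B, |f' x| ≤ K) {x : ℝ} (hx : x ∈ Icc A B) : |f x| ≤ K * (B - A) := by
  have h := (convex_Icc A B).norm_image_sub_le_of_norm_hasDerivWithin_le
    (fun t ht => (hf t ht).hasDerivWithinAt) hK hξ hx
  rw [hfξ, sub_zero, Real.norm_eq_abs, Real.norm_eq_abs] at h
  have hK0 : 0 ≤ K := (abs_nonneg _).trans (hK ξ hξ)
  refine h.trans (mul_le_mul_of_nonneg_left ?_ hK0)
  rw [abs_le]
  constructor <;> linarith [hx.1, hx.2, hξ.1, hξ.2]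

theorem abs_le_pow_mul_of_deriv_iterate_eq_zero {g : ℕ → ℝ → ℝ} {n : ℕ} {R : ℝ}
    (hg : ∀ k, ∀ x ∈ Icc A B, HasDerivAt (g k) (g (k + 1) x) x)
    (hzero : ∀ k < n, ∃ ξ ∈ Icc A B, g k ξ = 0) (hR : ∀ x ∈ Icc A B, |g n x| ≤ R)
    {k : ℕ} (hk : k ≤ n) {x : ℝ} (hx : x ∈ Icc A B) : |g k x| ≤ (B - A) ^ (n - k) * R := by
  induction hk using Nat.decreasingInduction generalizing x with
  | self => simpa using hR x hx
  | of_succ k hk ih =>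
    obtain ⟨ξ, hξ, hgξ⟩ := hzero k hk
    calc |g k x| ≤ (B - A) ^ (n - (k + 1)) * R * (B - A) :=
          abs_le_mul_of_eq_zero_of_abs_deriv_le (hg k) hξ hgξ (fun t ht => ih ht) hx
      _ = (B - A) ^ (n - k) * R := by
          rw [mul_right_comm, ← pow_succ, Nat.sub_add_eq, Nat.sub_add_cancel (by omega)]

end RealInterval

theorem Complex.norm_le_of_forall_abs_im_exp_mul_le {w : ℂ} {K : ℝ}
    (h : ∀ β : ℝ, |(exp (β * I) * w).im| ≤ K) : ‖w‖ ≤ K := by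
  have hrot : exp (↑(Real.pi / 2 - arg w) * I) * w = ‖w‖ * I := by
    calc exp (↑(Real.pi / 2 - arg w) * I) * w
        = exp (↑(Real.pi / 2 - arg w) * I) * (‖w‖ * exp (arg w * I)) := by
          rw [norm_mul_exp_arg_mul_I]
      _ = ‖w‖ * exp (↑Real.pi / 2 * I) := by
          rw [mul_left_comm, ← exp_add]; push_cast; ring_nf
      _ = ‖w‖ * I := by rw [exp_pi_div_two_mul_I]
  have h' := h (Real.pi / 2 - arg w)
  rw [hrot] at h'
  simpa using h'

theorem HasDerivAt.im {f : ℝ → ℂ} {f' : ℂ} {x : ℝ} (h : HasDerivAt f f' x) :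
    HasDerivAt (fun t => (f t).im) f'.im x :=
  imCLM.hasFDerivAt.comp_hasDerivAt x h

open Finset in
theorem eq_zero_of_forall_card_zeros_im_exp_mul {A B : ℝ} (hAB : A ≤ B) {n : ℕ}
    {v : ℕ → ℝ → ℂ} (hv : ∀ k, ∀ x ∈ Icc A B, HasDerivAt (v k) (v (k + 1) x) x)
    {c : ℕ → ℝ} (hc : ∀ j, 0 ≤ c j)
    (hvn : ∀ x ∈ Icc A B, ‖v n x‖ ≤ ∑ j ∈ range n, c j * ‖v j x‖)
    (hsmall : ∑ j ∈ range n, c j * (B - A) ^ (n - j) < 1)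
    (hzeros : ∀ β : ℝ, ∃ Z : Finset ℝ, n ≤ Z.card ∧ ↑Z ⊆ Icc A B ∧
      ∀ x ∈ Z, (exp (β * I) * v 0 x).im = 0)
    {x : ℝ} (hx : x ∈ Icc A B) : v 0 x = 0 := by
  set g : ℝ → ℕ → ℝ → ℝ := fun β k x => (exp (β * I) * v k x).im
  have hg : ∀ β k, ∀ x ∈ Icc A B, HasDerivAt (g β k) (g β (k + 1) x) x := fun β k x hx =>
    ((hv k x hx).const_mul _).im
  have hgzero : ∀ β, ∀ k < n, ∃ ξ ∈ Icc A B, g β k ξ = 0 := by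
    intro β k hk
    obtain ⟨Z, hcard, hZ, hZg⟩ := hzeros β
    obtain ⟨Z', hcard', hZ', hZ'g⟩ := exists_finset_deriv_iterate_eq_zero (hg β) hZ hZg k
    obtain ⟨ξ, hξ⟩ := Finset.card_pos.1 (by omega : 0 < Z'.card)
    exact ⟨ξ, hZ' hξ, hZ'g ξ hξ⟩
  have hmax : ∀ j, ∃ s ∈ Icc A B, IsMaxOn (fun x => ‖v j x‖) (Icc A B) s := fun j =>
    isCompact_Icc.exists_isMaxOn (nonempty_Icc.2 hAB) fun x hx =>
      (hv j x hx).continuousAt.norm.continuousWithinAt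
  choose s hs hsmax using hmax
  set R := ∑ j ∈ range n, c j * ‖v j (s j)‖
  have hgn : ∀ β, ∀ x ∈ Icc A B, |g β n x| ≤ R := by
    intro β x hx
    calc |g β n x| ≤ ‖exp (β * I) * v n x‖ := abs_im_le_norm _
      _ = ‖v n x‖ := by rw [norm_mul, norm_exp_ofReal_mul_I, one_mul]
      _ ≤ R := (hvn x hx).trans <| sum_le_sum fun j _ =>
          mul_le_mul_of_nonneg_left (hsmax j hx) (hc j)
  have hbound : ∀ k ≤ n, ‖v k (s k)‖ ≤ (B - A) ^ (n - k) * R := fun k hk =>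
    norm_le_of_forall_abs_im_exp_mul_le fun β =>
      abs_le_pow_mul_of_deriv_iterate_eq_zero (hg β) (hgzero β) (hgn β) hk (hs k)
  have hR : R ≤ 0 := by
    have : R ≤ (∑ j ∈ range n, c j * (B - A) ^ (n - j)) * R := by
      rw [sum_mul]
      refine sum_le_sum fun j hj => ?_
      rw [mul_assoc]
      exact mul_le_mul_of_nonneg_left (hbound j (mem_range.1 hj).le) (hc j)
    nlinarith
  have hv0 : ‖v 0 x‖ ≤ 0 := calc
    ‖v 0 x‖ ≤ ‖v 0 (s 0)‖ := hsmax 0 hx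
    _ ≤ (B - A) ^ n * R := hbound 0 (Nat.zero_le n)
    _ ≤ 0 := mul_nonpos_of_nonneg_of_nonpos (pow_nonneg (by linarith) n) hR
  exact norm_le_zero_iff.1 hv0

theorem ContinuousOn.exists_finset_card_eq_mapsTo {θ : ℝ → ℝ} {A B : ℝ} (hAB : A ≤ B)
    (hθ : ContinuousOn θ (Icc A B)) {T : Finset ℝ} (hT : ↑T ⊆ uIcc (θ A) (θ B)) :
    ∃ Z : Finset ℝ, Z.card = T.card ∧ ↑Z ⊆ Icc A B ∧ ∀ x ∈ Z, θ x ∈ T := by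
  have hivt := intermediate_value_uIcc (uIcc_of_le hAB ▸ hθ)
  rw [uIcc_of_le hAB] at hivt
  choose! σ hσ hθσ using fun t (ht : t ∈ T) => hivt (hT ht)
  refine ⟨T.image σ, Finset.card_image_of_injOn fun t ht t' ht' h => ?_, ?_, ?_⟩
  · rw [← hθσ t ht, ← hθσ t' ht', h]
  · simpa [Set.subset_def] using hσ
  · simp only [Finset.mem_image]
    rintro _ ⟨t, ht, rfl⟩
    rwa [hθσ t ht]

theorem exists_finset_card_eq_sin_add_eq_zero (w β : ℝ) (n : ℕ) :
    ∃ T : Finset ℝ, T.card = n ∧ ↑T ⊆ Icc w (w + n * Real.pi) ∧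
      ∀ t ∈ T, Real.sin (t + β) = 0 := by
  set m : ℤ := ⌈(w + β) / Real.pi⌉
  have hm : w + β ≤ m * Real.pi := (div_le_iff₀ Real.pi_pos).1 (Int.le_ceil _)
  have hm' : (m - 1) * Real.pi < w + β :=
    (lt_div_iff₀ Real.pi_pos).1 (sub_lt_iff_lt_add.2 (Int.ceil_lt_add_one _))
  refine ⟨(Finset.range n).image fun i : ℕ => (m + i : ℝ) * Real.pi - β, ?_, ?_, ?_⟩
  · rw [Finset.card_image_of_injective _ fun i j h => ?_, Finset.card_range]
    simpa [Real.pi_ne_zero] using h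
  · intro t ht
    simp only [Finset.coe_image, Finset.coe_range, mem_image, mem_Iio] at ht
    obtain ⟨i, hi, rfl⟩ := ht
    have hi' : (i : ℝ) + 1 ≤ n := by exact_mod_cast hi
    constructor <;> nlinarith [Real.pi_pos, (Nat.cast_nonneg i : (0 : ℝ) ≤ i)]
  · simp only [Finset.mem_image, Finset.mem_range]
    rintro _ ⟨i, -, rfl⟩
    simpa using Real.sin_int_mul_pi (m + i)

theorem exists_finset_card_im_exp_mul_eq_zero {f : ℝ → ℂ} {θ : ℝ → ℝ} {A B : ℝ} (hAB : A ≤ B)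
    (hθ : ContinuousOn θ (Icc A B)) (hf : ∀ s ∈ Icc A B, f s = ‖f s‖ * exp (θ s * I))
    {n : ℕ} (hvar : n * Real.pi ≤ |θ B - θ A|) (β : ℝ) :
    ∃ Z : Finset ℝ, n ≤ Z.card ∧ ↑Z ⊆ Icc A B ∧ ∀ x ∈ Z, (exp (β * I) * f x).im = 0 := by
  obtain ⟨T, hTcard, hT, hTsin⟩ := exists_finset_card_eq_sin_add_eq_zero (min (θ A) (θ B)) β n
  have hTθ : ↑T ⊆ uIcc (θ A) (θ B) := hT.trans <| Icc_subset_Icc le_rfl <| by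
    rw [← max_sub_min_eq_abs', max_comm, min_comm] at hvar
    linarith
  obtain ⟨Z, hZcard, hZ, hZθ⟩ := hθ.exists_finset_card_eq_mapsTo hAB hTθ
  refine ⟨Z, hZcard.trans hTcard |>.ge, hZ, fun x hx => ?_⟩
  rw [hf x (hZ hx), mul_left_comm, ← exp_add, ← add_mul, ← ofReal_add, im_ofReal_mul,
    exp_ofReal_mul_I_im, add_comm, hTsin _ (hZθ x hx), mul_zero]

open Finset in
theorem sum_range_mul_pow_sub_lt_one {C q : ℝ} (hC : 1 ≤ C) (hq : 0 ≤ q) (hCq : C * q ≤ 1 / 2)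
    (n : ℕ) : ∑ j ∈ range n, C * q ^ (n - j) < 1 := by
  have hhalf : ∑ j ∈ range n, (1 / 2 : ℝ) ^ (n - j) = 1 - (1 / 2) ^ n := by
    induction n with
    | zero => simp
    | succ n ih =>
      rw [sum_range_succ']
      simp only [Nat.add_sub_add_right, ih, Nat.sub_zero]
      ring
  calc ∑ j ∈ range n, C * q ^ (n - j) ≤ ∑ j ∈ range n, (1 / 2 : ℝ) ^ (n - j) := by
        refine sum_le_sum fun j hj => ?_
        have hk : n - j ≠ 0 := by have := mem_range.1 hj; omega
        calc C * q ^ (n - j) ≤ C ^ (n - j) * q ^ (n - j) :=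
              mul_le_mul_of_nonneg_right (le_self_pow₀ hC hk) (pow_nonneg hq _)
          _ = (C * q) ^ (n - j) := (mul_pow C q _).symm
          _ ≤ (1 / 2) ^ (n - j) := pow_le_pow_left₀ (by positivity) hCq _
    _ < 1 := by rw [hhalf]; linarith [pow_pos (by norm_num : (0 : ℝ) < 1 / 2) n]

open Finset in
theorem abs_sub_le_mul_of_forall_abs_sub_le {f : ℝ → ℝ} {N : ℕ} (hN : N ≠ 0) {K : ℝ}
    (h : ∀ i < N, |f ((i + 1) / N) - f (i / N)| ≤ K) : |f 1 - f 0| ≤ N * K := by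
  have htel : f 1 - f 0 = ∑ i ∈ range N, (f ((i + 1) / N) - f (i / N)) := by
    have := sum_range_sub (fun i : ℕ => f (i / N)) N
    rw [div_self (Nat.cast_ne_zero.2 hN), Nat.cast_zero, zero_div] at this
    rw [← this]
    push_cast
    rfl
  calc |f 1 - f 0| ≤ ∑ i ∈ range N, |f ((i + 1) / N) - f (i / N)| :=
        htel ▸ abs_sum_le_sum_abs _ _
    _ ≤ ∑ _i ∈ range N, K := sum_le_sum fun i hi => h i (mem_range.1 hi)
    _ = N * K := by rw [sum_const, card_range, nsmul_eq_mul]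

theorem add_ofReal_mul_sub_mem_segment (z0 z1 : ℂ) {s : ℝ} (hs : s ∈ Icc (0 : ℝ) 1) :
    z0 + s * (z1 - z0) ∈ segment ℝ z0 z1 := by
  rw [segment_eq_image']
  exact ⟨s, hs, by simp only [real_smul]⟩

theorem hasDerivAt_pow_mul_iteratedDeriv_add_ofReal_mul (y : ℂ → ℂ) (z w : ℂ) (k : ℕ) {s : ℝ}
    (hy : DifferentiableAt ℂ (iteratedDeriv k y) (z + s * w)) :
    HasDerivAt (fun t : ℝ => w ^ k * iteratedDeriv k y (z + t * w))
      (w ^ (k + 1) * iteratedDeriv (k + 1) y (z + s * w)) s := by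
  have hline : HasDerivAt (fun u : ℂ => z + u * w) w s := by
    simpa using ((hasDerivAt_id (s : ℂ)).mul_const w).const_add z
  have hderiv : HasDerivAt (iteratedDeriv k y) (iteratedDeriv (k + 1) y (z + s * w))
      (z + s * w) := by
    rw [iteratedDeriv_succ]
    exact hy.hasDerivAt
  have hcomp := hderiv.comp (s : ℂ) hline
  have h := (hcomp.comp_ofReal (z := s)).const_mul (w ^ k)
  rwa [mul_left_comm, ← pow_succ, mul_comm] at h

open Finset in
theorem norm_pow_mul_le_sum_of_add_sum_eq_zero {n : ℕ} {u a : ℕ → ℂ} {C : ℝ}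
    (hu : u n + ∑ j ∈ range n, a j * u j = 0) (ha : ∀ j < n, ‖a j‖ ≤ C) (w : ℂ) :
    ‖w ^ n * u n‖ ≤ ∑ j ∈ range n, C * ‖w‖ ^ (n - j) * ‖w ^ j * u j‖ := by
  have hwu : w ^ n * u n = -∑ j ∈ range n, a j * w ^ (n - j) * (w ^ j * u j) := by
    rw [eq_neg_of_add_eq_zero_left hu, mul_neg, mul_sum]
    congr 1
    refine sum_congr rfl fun j hj => ?_
    rw [← pow_sub_mul_pow w (mem_range.1 hj).le]
    ring
  rw [hwu, norm_neg]
  refine (norm_sum_le _ _).trans (sum_le_sum fun j hj => ?_)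
  rw [norm_mul, norm_mul, norm_pow]
  gcongr
  exact ha j (mem_range.1 hj)

theorem abs_sub_lt_mul_pi_of_linear_ode {n : ℕ} {U : Set ℂ} (hU : IsOpen U) {z0 z1 : ℂ}
    (hseg : segment ℝ z0 z1 ⊆ U) {a : ℕ → ℂ → ℂ} {C : ℝ} (hC : 1 ≤ C)
    (hbound : ∀ j < n, ∀ t ∈ segment ℝ z0 z1, ‖a j t‖ ≤ C) {y : ℂ → ℂ}
    (hyD : ∀ j : ℕ, DifferentiableOn ℂ (iteratedDeriv j y) U)
    (hode : ∀ t ∈ segment ℝ z0 z1,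
      iteratedDeriv n y t + ∑ j ∈ Finset.range n, a j t * iteratedDeriv j y t = 0)
    (hnz : ∀ t ∈ segment ℝ z0 z1, y t ≠ 0) {θ : ℝ → ℝ} (hθ : ContinuousOn θ (Icc 0 1))
    (hbranch : ∀ s ∈ Icc (0 : ℝ) 1,
      y (z0 + s * (z1 - z0)) = ‖y (z0 + s * (z1 - z0))‖ * exp (θ s * I))
    {A B : ℝ} (hA : 0 ≤ A) (hAB : A ≤ B) (hB : B ≤ 1)
    (hsmall : C * ((B - A) * ‖z1 - z0‖) ≤ 1 / 2) :
    |θ B - θ A| < n * Real.pi := by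
  by_contra! hvar
  have hsub : Icc A B ⊆ Icc 0 1 := Icc_subset_Icc hA hB
  have hmem : ∀ s ∈ Icc A B, z0 + s * (z1 - z0) ∈ segment ℝ z0 z1 := fun s hs =>
    add_ofReal_mul_sub_mem_segment z0 z1 (hsub hs)
  set v : ℕ → ℝ → ℂ := fun k s => (z1 - z0) ^ k * iteratedDeriv k y (z0 + s * (z1 - z0))
  have hv : ∀ k, ∀ s ∈ Icc A B, HasDerivAt (v k) (v (k + 1) s) s := fun k s hs =>
    hasDerivAt_pow_mul_iteratedDeriv_add_ofReal_mul y z0 (z1 - z0) k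
      ((hyD k).differentiableAt (hU.mem_nhds (hseg (hmem s hs))))
  have hvn : ∀ s ∈ Icc A B,
      ‖v n s‖ ≤ ∑ j ∈ Finset.range n, C * ‖z1 - z0‖ ^ (n - j) * ‖v j s‖ := fun s hs =>
    norm_pow_mul_le_sum_of_add_sum_eq_zero (u := fun j => iteratedDeriv j y (z0 + s * (z1 - z0)))
      (hode _ (hmem s hs))
      (fun j hj => hbound j hj _ (hmem s hs)) (z1 - z0)
  have hv0 : ∀ s ∈ Icc A B, v 0 s = ‖v 0 s‖ * exp (θ s * I) := fun s hs => by
    simpa [v] using hbranch s (hsub hs)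
  have hgeom : ∑ j ∈ Finset.range n, C * ‖z1 - z0‖ ^ (n - j) * (B - A) ^ (n - j) < 1 := by
    simp_rw [mul_assoc, ← mul_pow, mul_comm ‖z1 - z0‖]
    exact sum_range_mul_pow_sub_lt_one hC (mul_nonneg (by linarith) (norm_nonneg _)) hsmall n
  have hyA := eq_zero_of_forall_card_zeros_im_exp_mul hAB hv
    (fun j => mul_nonneg (by linarith) (pow_nonneg (norm_nonneg _) _)) hvn hgeom
    (exists_finset_card_im_exp_mul_eq_zero hAB (hθ.mono hsub) hv0 hvar) (left_mem_Icc.2 hAB)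
  exact hnz _ (hmem A (left_mem_Icc.2 hAB)) (by simpa [v] using hyA)

theorem stmt5_general (n : ℕ) (U : Set ℂ) (hU : IsOpen U) (z0 z1 : ℂ)
    (hseg : segment ℝ z0 z1 ⊆ U)
    (a : ℕ → ℂ → ℂ)
    (C : ℝ) (hC : 1 ≤ C)
    (hbound : ∀ j < n, ∀ t ∈ segment ℝ z0 z1, ‖a j t‖ ≤ C)
    (y : ℂ → ℂ)
    (hyD : ∀ j : ℕ, DifferentiableOn ℂ (iteratedDeriv j y) U)
    (hode : ∀ t ∈ U,
      iteratedDeriv n y t + ∑ j ∈ Finset.range n, a j t * iteratedDeriv j y t = 0)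
    (hnz : ∀ t ∈ segment ℝ z0 z1, y t ≠ 0)
    (θ : ℝ → ℝ) (hθ : ContinuousOn θ (Icc (0:ℝ) 1))
    (hbranch : ∀ s ∈ Icc (0:ℝ) 1,
      y (z0 + (s : ℂ) * (z1 - z0)) =
        (‖y (z0 + (s : ℂ) * (z1 - z0))‖ : ℂ) * Complex.exp (θ s * Complex.I)) :
    |θ 1 - θ 0| ≤ Real.pi * (n + 1) * (1 + ‖z1 - z0‖ * C / Real.log (3 / 2)) := by
  set ρ := Real.log (3 / 2)
  have hρ : 0 < ρ := Real.log_pos (by norm_num)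
  have hρ_le : ρ ≤ 1 / 2 := by linarith [Real.log_le_sub_one_of_pos (by norm_num : (0:ℝ) < 3 / 2)]
  set x := ‖z1 - z0‖ * C / ρ
  have hx : 0 ≤ x := by positivity
  set N := ⌊x⌋₊ + 1
  have hxN : x < N := by simpa [N] using Nat.lt_floor_add_one x
  have hNx : (N : ℝ) ≤ x + 1 := by simpa [N] using Nat.floor_le hx
  have hlC : C * ‖z1 - z0‖ ≤ N * (1 / 2) := by
    have : ‖z1 - z0‖ * C = x * ρ := (div_mul_cancel₀ _ hρ.ne').symm
    nlinarith
  have hpiece : ∀ i < N, |θ ((i + 1) / N) - θ (i / N)| ≤ Real.pi * (n + 1) := by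
    intro i hi
    have hN : (0 : ℝ) < N := by positivity
    have hi' : (i : ℝ) + 1 ≤ N := by exact_mod_cast hi
    refine (abs_sub_lt_mul_pi_of_linear_ode hU hseg hC hbound hyD
      (fun t ht => hode t (hseg ht)) hnz hθ hbranch (by positivity)
      (div_le_div_of_nonneg_right (by linarith) hN.le) ((div_le_one hN).2 hi') ?_).le.trans ?_
    · rw [← sub_div, add_sub_cancel_left, one_div_mul_eq_div, mul_div_assoc', div_le_iff₀ hN]
      linarith
    · nlinarith [Real.pi_pos]
  calc |θ 1 - θ 0| ≤ N * (Real.pi * (n + 1)) :=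
        abs_sub_le_mul_of_forall_abs_sub_le (Nat.succ_ne_zero _) hpiece
    _ ≤ (x + 1) * (Real.pi * (n + 1)) := by gcongr
    _ = Real.pi * (n + 1) * (1 + x) := by ring

/-- Yakovenko's theorem: if `y` is a nontrivial (nowhere vanishing on the
segment) solution of `y^{(n)} + a_{n−1} y^{(n−1)} + … + a_0 y = 0` with
coefficients holomorphic on an open set containing the segment from `z0` to
`z1`, bounded in modulus by `C ≥ 1` on the segment, then the variation of
argument of `y` along the segment is at most `π(n+1)(1 + lC/log(3/2))`,
where `l` is the length of the segment. -/
theorem stmt5 (n : ℕ) (U : Set ℂ) (hU : IsOpen U) (z0 z1 : ℂ)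
    (hseg : segment ℝ z0 z1 ⊆ U)
    (a : ℕ → ℂ → ℂ) (ha : ∀ j < n, DifferentiableOn ℂ (a j) U)
    (C : ℝ) (hC : 1 ≤ C)
    (hbound : ∀ j < n, ∀ t ∈ segment ℝ z0 z1, ‖a j t‖ ≤ C)
    (y : ℂ → ℂ) (hy : DifferentiableOn ℂ y U)
    (hyD : ∀ j : ℕ, DifferentiableOn ℂ (iteratedDeriv j y) U)
    (hode : ∀ t ∈ U,
      iteratedDeriv n y t + ∑ j ∈ Finset.range n, a j t * iteratedDeriv j y t = 0)
    (hnz : ∀ t ∈ segment ℝ z0 z1, y t ≠ 0)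
    (θ : ℝ → ℝ) (hθ : ContinuousOn θ (Icc (0:ℝ) 1))
    (hbranch : ∀ s ∈ Icc (0:ℝ) 1,
      y (z0 + (s : ℂ) * (z1 - z0)) =
        (‖y (z0 + (s : ℂ) * (z1 - z0))‖ : ℂ) * Complex.exp (θ s * Complex.I)) :
    |θ 1 - θ 0| ≤ Real.pi * (n + 1) * (1 + ‖z1 - z0‖ * C / Real.log (3 / 2)) :=
  stmt5_general n U hU z0 z1 hseg a C hC hbound y hyD hode hnz θ hθ hbranch
end

section
/- The function f(t, λ_1, λ_2) = λ_1 λ_2 / (λ_1^2 + λ_2^2 t) depends regularly on the parameters (λ_1, λ_2) at (0,0): for every holomorphic arc (λ_1(ε), λ_2(ε)) through (0,0) on which the denominator is not identically zero in t, the restricted function f(t, λ_1(ε), λ_2(ε)) extends to a function holomorphic in ε at ε = 0. However, f does not admit a representation a(t,λ)/b(t,λ) with a, b holomorphic near (t,λ) = (t_0, 0, 0) and b(·, 0, 0) not identically zero. -/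
open Metric Set

private lemma eq_of_eventually_punctured {g h : ℂ → ℂ} (hg : ContinuousAt g 0)
    (hh : ContinuousAt h 0) (he : g =ᶠ[nhdsWithin (0:ℂ) {(0:ℂ)}ᶜ] h) :
    g 0 = h 0 :=
  tendsto_nhds_unique (hg.tendsto.mono_left nhdsWithin_le_nhds)
    ((hh.tendsto.mono_left nhdsWithin_le_nhds).congr' he.symm)

/-- The function `f(t, λ₁, λ₂) = λ₁λ₂/(λ₁² + λ₂² t)` depends regularly, but not
holomorphically, on the parameters `(λ₁, λ₂)` at `(0,0)`:
(1) for every holomorphic arc `λ(ε)` through `(0,0)` on which the denominator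
is not identically zero, the restriction extends holomorphically in `ε` at
`ε = 0` (expressed as `f = a₁/b₁` with `a₁,b₁` holomorphic and `b₁(·,0) ≢ 0`);
(2) there is no representation `f = a/b` with `a, b` holomorphic near
`(t₀, 0, 0)` and `b(·,0,0)` not identically zero. -/
theorem stmt12 :
    (∀ lam : ℂ → ℂ × ℂ, AnalyticAt ℂ lam 0 → lam 0 = 0 →
      (∀ δ > (0 : ℝ), ∃ ε t : ℂ, ‖ε‖ < δ ∧ (lam ε).1 ^ 2 + (lam ε).2 ^ 2 * t ≠ 0) →
      ∃ δ > (0 : ℝ), ∃ a1 b1 : ℂ × ℂ → ℂ,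
        DifferentiableOn ℂ a1 ((univ : Set ℂ) ×ˢ ball (0 : ℂ) δ) ∧
        DifferentiableOn ℂ b1 ((univ : Set ℂ) ×ˢ ball (0 : ℂ) δ) ∧
        (∃ t : ℂ, b1 (t, 0) ≠ 0) ∧
        ∀ t : ℂ, ∀ ε ∈ ball (0 : ℂ) δ,
          ((lam ε).1 * (lam ε).2) * b1 (t, ε) =
            ((lam ε).1 ^ 2 + (lam ε).2 ^ 2 * t) * a1 (t, ε))
    ∧
    (∀ t0 : ℂ, ¬ ∃ r > (0 : ℝ), ∃ a b : ℂ × ℂ × ℂ → ℂ,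
      DifferentiableOn ℂ a (ball ((t0, 0, 0) : ℂ × ℂ × ℂ) r) ∧
      DifferentiableOn ℂ b (ball ((t0, 0, 0) : ℂ × ℂ × ℂ) r) ∧
      (∃ t : ℂ, ((t, 0, 0) : ℂ × ℂ × ℂ) ∈ ball ((t0, 0, 0) : ℂ × ℂ × ℂ) r ∧
        b (t, 0, 0) ≠ 0) ∧
      ∀ q ∈ ball ((t0, 0, 0) : ℂ × ℂ × ℂ) r,
        a q * (q.2.1 ^ 2 + q.2.2 ^ 2 * q.1) = b q * (q.2.1 * q.2.2)) := by
  constructor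
  · -- Part 1: regular dependence
    intro lam hlam hlam0 _hden
    have h1a : AnalyticAt ℂ (fun ε => (lam ε).1) 0 := analyticAt_fst.comp hlam
    have h2a : AnalyticAt ℂ (fun ε => (lam ε).2) 0 := analyticAt_snd.comp hlam
    by_cases h1z : ∀ᶠ ε in nhds (0:ℂ), (lam ε).1 = 0
    · rw [Metric.eventually_nhds_iff] at h1z
      obtain ⟨δ, hδ, hz⟩ := h1z
      refine ⟨δ, hδ, fun _ => 0, fun _ => 1,
        (differentiable_const _).differentiableOn,
        (differentiable_const _).differentiableOn, ⟨0, one_ne_zero⟩, ?_⟩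
      intro t ε hε
      rw [hz (by simpa [dist_zero_right] using mem_ball.mp hε)]
      ring
    by_cases h2z : ∀ᶠ ε in nhds (0:ℂ), (lam ε).2 = 0
    · rw [Metric.eventually_nhds_iff] at h2z
      obtain ⟨δ, hδ, hz⟩ := h2z
      refine ⟨δ, hδ, fun _ => 0, fun _ => 1,
        (differentiable_const _).differentiableOn,
        (differentiable_const _).differentiableOn, ⟨0, one_ne_zero⟩, ?_⟩
      intro t ε hε
      rw [hz (by simpa [dist_zero_right] using mem_ball.mp hε)]
      ring
    obtain ⟨k, u, hu, hu0, hueq⟩ := h1a.exists_eventuallyEq_pow_smul_nonzero_iff.mpr h1z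
    obtain ⟨m, v, hv, hv0, hveq⟩ := h2a.exists_eventuallyEq_pow_smul_nonzero_iff.mpr h2z
    have hall : ∀ᶠ ε in nhds (0:ℂ),
        ((lam ε).1 = ε ^ k * u ε ∧ (lam ε).2 = ε ^ m * v ε) ∧
        (AnalyticAt ℂ u ε ∧ AnalyticAt ℂ v ε) := by
      filter_upwards [hueq, hveq, hu.eventually_analyticAt, hv.eventually_analyticAt] with
        ε e1 e2 e3 e4
      refine ⟨⟨?_, ?_⟩, e3, e4⟩
      · simpa [smul_eq_mul] using e1
      · simpa [smul_eq_mul] using e2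
    rw [Metric.eventually_nhds_iff] at hall
    obtain ⟨δ, hδ, hall⟩ := hall
    rcases le_or_gt k m with hkm | hmk
    · obtain ⟨d, rfl⟩ := Nat.exists_eq_add_of_le hkm
      refine ⟨δ, hδ, fun p => p.2 ^ d * (u p.2 * v p.2),
        fun p => u p.2 ^ 2 + p.2 ^ (2 * d) * v p.2 ^ 2 * p.1, ?_, ?_, ⟨0, ?_⟩, ?_⟩
      · intro p hp
        obtain ⟨-, hAu, hAv⟩ := hall (by simpa [dist_zero_right] using mem_ball.mp hp.2)
        have hud : DifferentiableAt ℂ (fun q : ℂ × ℂ => u q.2) p :=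
          hAu.differentiableAt.comp p differentiableAt_snd
        have hvd : DifferentiableAt ℂ (fun q : ℂ × ℂ => v q.2) p :=
          hAv.differentiableAt.comp p differentiableAt_snd
        exact ((differentiableAt_snd.pow d).mul (hud.mul hvd)).differentiableWithinAt
      · intro p hp
        obtain ⟨-, hAu, hAv⟩ := hall (by simpa [dist_zero_right] using mem_ball.mp hp.2)
        have hud : DifferentiableAt ℂ (fun q : ℂ × ℂ => u q.2) p :=
          hAu.differentiableAt.comp p differentiableAt_snd
        have hvd : DifferentiableAt ℂ (fun q : ℂ × ℂ => v q.2) p :=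
          hAv.differentiableAt.comp p differentiableAt_snd
        exact ((hud.pow 2).add
          (((differentiableAt_snd.pow (2 * d)).mul (hvd.pow 2)).mul
            differentiableAt_fst)).differentiableWithinAt
      · simpa using pow_ne_zero 2 hu0
      · intro t ε hε
        obtain ⟨⟨he1, he2⟩, -⟩ := hall (by simpa [dist_zero_right] using mem_ball.mp hε)
        rw [he1, he2]
        ring
    · obtain ⟨d, rfl⟩ := Nat.exists_eq_add_of_lt hmk
      refine ⟨δ, hδ, fun p => p.2 ^ (d + 1) * (u p.2 * v p.2),
        fun p => p.2 ^ (2 * (d + 1)) * u p.2 ^ 2 + v p.2 ^ 2 * p.1, ?_, ?_, ⟨1, ?_⟩, ?_⟩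
      · intro p hp
        obtain ⟨-, hAu, hAv⟩ := hall (by simpa [dist_zero_right] using mem_ball.mp hp.2)
        have hud : DifferentiableAt ℂ (fun q : ℂ × ℂ => u q.2) p :=
          hAu.differentiableAt.comp p differentiableAt_snd
        have hvd : DifferentiableAt ℂ (fun q : ℂ × ℂ => v q.2) p :=
          hAv.differentiableAt.comp p differentiableAt_snd
        exact ((differentiableAt_snd.pow (d + 1)).mul (hud.mul hvd)).differentiableWithinAt
      · intro p hp
        obtain ⟨-, hAu, hAv⟩ := hall (by simpa [dist_zero_right] using mem_ball.mp hp.2)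
        have hud : DifferentiableAt ℂ (fun q : ℂ × ℂ => u q.2) p :=
          hAu.differentiableAt.comp p differentiableAt_snd
        have hvd : DifferentiableAt ℂ (fun q : ℂ × ℂ => v q.2) p :=
          hAv.differentiableAt.comp p differentiableAt_snd
        exact (((differentiableAt_snd.pow (2 * (d + 1))).mul (hud.pow 2)).add
          ((hvd.pow 2).mul differentiableAt_fst)).differentiableWithinAt
      · simpa using pow_ne_zero 2 hv0
      · intro t ε hε
        obtain ⟨⟨he1, he2⟩, -⟩ := hall (by simpa [dist_zero_right] using mem_ball.mp hε)
        rw [he1, he2]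
        ring
  · -- Part 2: no holomorphic representation
    rintro t0 ⟨r, hr, a, b, ha, hb, ⟨t, ht, hbt⟩, hid⟩
    have hca : ContinuousAt a ((t, 0, 0) : ℂ × ℂ × ℂ) :=
      ha.continuousOn.continuousAt (isOpen_ball.mem_nhds ht)
    have hcb : ContinuousAt b ((t, 0, 0) : ℂ × ℂ × ℂ) :=
      hb.continuousOn.continuousAt (isOpen_ball.mem_nhds ht)
    have hc1 : ContinuousAt (fun s : ℂ => ((t, s, 0) : ℂ × ℂ × ℂ)) 0 := by fun_prop
    have hc2 : ContinuousAt (fun s : ℂ => ((t, s, s) : ℂ × ℂ × ℂ)) 0 := by fun_prop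
    have hmem1 : ∀ᶠ s in nhds (0:ℂ), ((t, s, 0) : ℂ × ℂ × ℂ) ∈ ball ((t0, 0, 0) : ℂ × ℂ × ℂ) r :=
      hc1.eventually_mem (isOpen_ball.mem_nhds ht)
    have hmem2 : ∀ᶠ s in nhds (0:ℂ), ((t, s, s) : ℂ × ℂ × ℂ) ∈ ball ((t0, 0, 0) : ℂ × ℂ × ℂ) r :=
      hc2.eventually_mem (isOpen_ball.mem_nhds ht)
    -- a (t,0,0) = 0
    have haz : a (t, 0, 0) = 0 := by
      have h1 : ContinuousAt (fun s : ℂ => a (t, s, 0)) 0 := by exact hca.tendsto.comp hc1.tendsto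
      have h2 : ∀ᶠ s in nhdsWithin (0:ℂ) {(0:ℂ)}ᶜ, a (t, s, 0) = 0 := by
        filter_upwards [hmem1.filter_mono nhdsWithin_le_nhds, self_mem_nhdsWithin] with s hs hs0
        have h0 := hid (t, s, 0) hs
        have h3 : a (t, s, 0) * s ^ 2 = 0 := by
          simpa using h0
        exact (mul_eq_zero.mp h3).resolve_right (pow_ne_zero 2 hs0)
      exact eq_of_eventually_punctured h1 continuousAt_const h2
    -- b (t,0,0) = a (t,0,0) * (1 + t) = 0
    have hbz : b (t, 0, 0) = a (t, 0, 0) * (1 + t) := by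
      have h1 : ContinuousAt (fun s : ℂ => b (t, s, s)) 0 := by exact hcb.tendsto.comp hc2.tendsto
      have h1' : ContinuousAt (fun s : ℂ => a (t, s, s) * (1 + t)) 0 :=
        by
        have : ContinuousAt (fun s : ℂ => a (t, s, s)) 0 := by exact hca.tendsto.comp hc2.tendsto
        exact this.mul continuousAt_const
      have h2 : ∀ᶠ s in nhdsWithin (0:ℂ) {(0:ℂ)}ᶜ,
          b (t, s, s) = a (t, s, s) * (1 + t) := by
        filter_upwards [hmem2.filter_mono nhdsWithin_le_nhds, self_mem_nhdsWithin] with s hs hs0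
        have h0 := hid (t, s, s) hs
        have h3 : b (t, s, s) * s ^ 2 = (a (t, s, s) * (1 + t)) * s ^ 2 := by
          simp only [Prod.fst, Prod.snd] at h0
          linear_combination -h0
        exact mul_right_cancel₀ (pow_ne_zero 2 hs0) h3
      exact eq_of_eventually_punctured h1 h1' h2
    rw [haz, zero_mul] at hbz
    exact hbt hbz
end
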